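/- With C_{n,m}^0(Y_k)(x) = ∂_x^n[(1-|x|^2)^n Y_k(x)], for N ≥ 0, C_{2N+1,m}^0(Y_k)(x) = -(2^{2N+1}(2N+1)!/N!) Σ_{l=0}^{N} C(N,l) (-1)^l (Γ(l+k+m/2+N+1)/Γ(l+k+m/2+1)) |x|^{2l} x Y_k(x). -/

import Mathlib

open scoped BigOperators

/-- Partial derivative in the `j`-th coordinate direction. -/
noncomputable def pderiv' {m : ℕ} {A : Type*} [NormedAddCommGroup A] [NormedSpace ℝ A]
    (j : Fin m) (f : (Fin m → ℝ) → A) (x : Fin m → ℝ) : A :=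
  fderiv ℝ f x (Pi.single j 1)

/-- The Dirac operator `∂_x f = ∑ j, e j * ∂ f/∂ x_j` associated with the
Clifford generators `e`. -/
noncomputable def dirac {m : ℕ} {A : Type*} [NormedRing A] [NormedAlgebra ℝ A]
    (e : Fin m → A) (f : (Fin m → ℝ) → A) (x : Fin m → ℝ) : A :=
  ∑ j, e j * pderiv' j f x

/-- The Euler operator `E f = ∑ j, x j • ∂ f/∂ x_j`. -/
noncomputable def euler {m : ℕ} {A : Type*} [NormedAddCommGroup A] [NormedSpace ℝ A]
    (f : (Fin m → ℝ) → A) (x : Fin m → ℝ) : A :=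
  ∑ j, x j • pderiv' j f x

/-- The Clifford 1-vector `∑ j, x j • e j` associated with `x ∈ ℝ^m`. -/
def vecc {m : ℕ} {A : Type*} [Ring A] [Algebra ℝ A]
    (e : Fin m → A) (x : Fin m → ℝ) : A :=
  ∑ j, x j • e j

section Aux

variable {m : ℕ} {A : Type*} [NormedRing A] [NormedAlgebra ℝ A]

lemma pderiv'_eq {f : (Fin m → ℝ) → A} {L : (Fin m → ℝ) →L[ℝ] A} {x : Fin m → ℝ}
    (h : HasFDerivAt f L x) (j : Fin m) : pderiv' j f x = L (Pi.single j 1) := by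
  rw [pderiv', h.fderiv]

lemma hasFDerivAt_sumSq (x : Fin m → ℝ) :
    HasFDerivAt (fun y : Fin m → ℝ => ∑ i, y i ^ 2)
      (∑ i : Fin m, (2 * x i) • (ContinuousLinearMap.proj i : (Fin m → ℝ) →L[ℝ] ℝ)) x := by
  refine HasFDerivAt.fun_sum fun i _ => ?_
  have h1 : HasFDerivAt (fun y : Fin m → ℝ => y i)
      (ContinuousLinearMap.proj i : (Fin m → ℝ) →L[ℝ] ℝ) x :=
    (ContinuousLinearMap.proj (R := ℝ) (φ := fun _ : Fin m => ℝ) i).hasFDerivAt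
  have h2 := (hasDerivAt_pow 2 (x i)).comp_hasFDerivAt x h1
  simpa [Function.comp_def, pow_one, smul_smul] using h2

lemma sumSqDeriv_apply (x : Fin m → ℝ) (j : Fin m) :
    (∑ i : Fin m, (2 * x i) • (ContinuousLinearMap.proj i : (Fin m → ℝ) →L[ℝ] ℝ))
      (Pi.single j 1) = 2 * x j := by
  simp [ContinuousLinearMap.sum_apply, Pi.single_apply]


lemma hasFDerivAt_vecc (e : Fin m → A) (x : Fin m → ℝ) :
    HasFDerivAt (vecc e)
      (∑ i : Fin m, (ContinuousLinearMap.proj (R := ℝ) (φ := fun _ : Fin m => ℝ) i).smulRight (e i)) x := by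
  have h : vecc e = fun y : Fin m → ℝ =>
      (∑ i : Fin m, (ContinuousLinearMap.proj (R := ℝ) (φ := fun _ : Fin m => ℝ) i).smulRight (e i)) y := by
    funext y
    simp [vecc, ContinuousLinearMap.sum_apply]
  rw [h]
  exact ContinuousLinearMap.hasFDerivAt _

lemma veccDeriv_apply (e : Fin m → A) (j : Fin m) :
    (∑ i : Fin m, (ContinuousLinearMap.proj (R := ℝ) (φ := fun _ : Fin m => ℝ) i).smulRight (e i))
      (Pi.single j 1) = e j := by
  simp [ContinuousLinearMap.sum_apply, Pi.single_apply, ite_smul]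

lemma hasDerivAt_polySum (a : ℕ → ℝ) (d : ℕ) (t : ℝ) :
    HasDerivAt (fun s : ℝ => ∑ l ∈ Finset.range d, a l * s ^ l)
      (∑ l ∈ Finset.range d, a l * (l * t ^ (l - 1))) t :=
  HasDerivAt.fun_sum fun l _ => (hasDerivAt_pow l t).const_mul (a l)

lemma pderiv'_polySmul (a : ℕ → ℝ) (d : ℕ) {W : (Fin m → ℝ) → A} {W' : (Fin m → ℝ) →L[ℝ] A}
    {x : Fin m → ℝ} (hW : HasFDerivAt W W' x) (j : Fin m) :
    pderiv' j (fun y => (∑ l ∈ Finset.range d, a l * (∑ i, y i ^ 2) ^ l) • W y) x =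
      (∑ l ∈ Finset.range d, a l * (∑ i, x i ^ 2) ^ l) • W' (Pi.single j 1) +
        ((∑ l ∈ Finset.range d, a l * (l * (∑ i, x i ^ 2) ^ (l - 1))) * (2 * x j)) • W x := by
  have hq := (hasDerivAt_polySum a d (∑ i, x i ^ 2)).comp_hasFDerivAt x (hasFDerivAt_sumSq x)
  have h : HasFDerivAt (fun y => (∑ l ∈ Finset.range d, a l * (∑ i, y i ^ 2) ^ l) • W y)
      ((∑ l ∈ Finset.range d, a l * (∑ i, x i ^ 2) ^ l) • W' +
        ((∑ l ∈ Finset.range d, a l * (l * (∑ i, x i ^ 2) ^ (l - 1))) •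
          (∑ i : Fin m, (2 * x i) • (ContinuousLinearMap.proj (R := ℝ) (φ := fun _ : Fin m => ℝ) i))).smulRight (W x)) x := by
    have := HasFDerivAt.smul (c := fun y : Fin m → ℝ => ∑ l ∈ Finset.range d, a l * (∑ i, y i ^ 2) ^ l) hq hW
    exact this
  rw [pderiv'_eq h j]
  simp [ContinuousLinearMap.add_apply, ContinuousLinearMap.smulRight_apply,
    ContinuousLinearMap.smul_apply, sumSqDeriv_apply, smul_smul, Pi.single_apply]


lemma vecc_mul_self (e : Fin m → A) (hsq : ∀ j, e j * e j = -1)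
    (hanti : ∀ i j, i ≠ j → e i * e j = -(e j * e i)) (x : Fin m → ℝ) :
    vecc e x * vecc e x = (-(∑ j, x j ^ 2)) • (1 : A) := by
  have expand : vecc e x * vecc e x
      = ∑ i : Fin m, ∑ j : Fin m, (x i * x j) • (e i * e j) := by
    rw [vecc, Finset.sum_mul_sum]
    refine Finset.sum_congr rfl fun i _ => Finset.sum_congr rfl fun j _ => ?_
    rw [smul_mul_assoc, mul_smul_comm, smul_smul]
  have key : ∀ i j : Fin m, (x i * x j) • (e i * e j) + (x j * x i) • (e j * e i)
      = if j = i then (-(2 * x i ^ 2)) • (1 : A) else 0 := by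
    intro i j
    by_cases h : j = i
    · subst h
      rw [if_pos rfl, hsq j, ← add_smul, smul_neg, ← neg_smul]
      congr 1
      ring
    · rw [if_neg h, hanti j i h, smul_neg, mul_comm (x j) (x i), ← smul_neg, ← smul_add]
      simp
  have h2 : (2 : ℝ) • (vecc e x * vecc e x)
      = ∑ i : Fin m, ∑ j : Fin m, ((x i * x j) • (e i * e j) + (x j * x i) • (e j * e i)) := by
    simp only [Finset.sum_add_distrib]
    rw [two_smul, expand]
    congr 1
    exact Finset.sum_comm
  rw [Finset.sum_congr rfl (fun i _ => Finset.sum_congr rfl fun j _ => key i j)] at h2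
  simp only [Finset.sum_ite_eq, Finset.sum_ite_eq', Finset.mem_univ, if_pos] at h2
  have h3 : (2 : ℝ) • (vecc e x * vecc e x) = (2 : ℝ) • ((-(∑ j, x j ^ 2)) • (1 : A)) := by
    rw [h2, smul_smul, ← Finset.sum_smul]
    congr 1
    rw [mul_neg, Finset.mul_sum, ← Finset.sum_neg_distrib]
  exact smul_right_injective A two_ne_zero h3

lemma gen_mul_vecc (e : Fin m → A) (hsq : ∀ j, e j * e j = -1)
    (hanti : ∀ i j, i ≠ j → e i * e j = -(e j * e i)) (x : Fin m → ℝ) (j : Fin m) :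
    e j * vecc e x = (-(2 * x j)) • (1 : A) - vecc e x * e j := by
  have hm2 : ((-1 : A) + -1) = (-(2 : ℝ)) • (1 : A) := by
    rw [neg_smul, two_smul]
    norm_num
  have h : e j * vecc e x + vecc e x * e j = (-(2 * x j)) • (1 : A) := by
    rw [vecc, Finset.mul_sum, Finset.sum_mul, ← Finset.sum_add_distrib]
    rw [Finset.sum_eq_single j]
    · rw [mul_smul_comm, smul_mul_assoc, ← smul_add, hsq j, hm2, smul_smul]
      congr 1
      ring
    · intro i _ hij
      rw [mul_smul_comm, smul_mul_assoc, ← smul_add, hanti i j hij]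
      simp
    · simp
  exact eq_sub_of_add_eq h


lemma euler_eq {k : ℕ} {Y : (Fin m → ℝ) → A} (hYd : Differentiable ℝ Y)
    (hhomog : ∀ (c : ℝ), 0 < c → ∀ x : Fin m → ℝ, Y (c • x) = c ^ k • Y x)
    (x : Fin m → ℝ) : euler Y x = (k : ℝ) • Y x := by
  have hx : HasDerivAt (fun c : ℝ => c • x) x 1 := by
    simpa using (hasDerivAt_id (1 : ℝ)).smul_const x
  have h1 : HasDerivAt (fun c : ℝ => Y (c • x)) (fderiv ℝ Y x x) 1 := by
    have hYx : HasFDerivAt Y (fderiv ℝ Y ((1 : ℝ) • x)) ((1 : ℝ) • x) :=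
      (hYd _).hasFDerivAt
    have := hYx.comp_hasDerivAt 1 hx
    simpa [Function.comp_def] using this
  have h2 : HasDerivAt (fun c : ℝ => c ^ k • Y x) ((k : ℝ) • Y x) 1 := by
    simpa using (hasDerivAt_pow k (1 : ℝ)).smul_const (Y x)
  have heq : (fun c : ℝ => Y (c • x)) =ᶠ[nhds 1] fun c => c ^ k • Y x := by
    filter_upwards [eventually_gt_nhds (zero_lt_one)] with c hc
    exact hhomog c hc x
  have h1' : HasDerivAt (fun c : ℝ => Y (c • x)) ((k : ℝ) • Y x) 1 :=
    h2.congr_of_eventuallyEq heq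
  have hkey : fderiv ℝ Y x x = (k : ℝ) • Y x := h1.unique h1'
  have hxsum : (∑ j, x j • (Pi.single j 1 : Fin m → ℝ)) = x := by
    conv_rhs => rw [pi_eq_sum_univ x]
    refine Finset.sum_congr rfl fun j _ => ?_
    congr 1
    funext i
    simp [Pi.single_apply, eq_comm]
  calc euler Y x = ∑ j, x j • (fderiv ℝ Y x) (Pi.single j 1) := rfl
    _ = (fderiv ℝ Y x) (∑ j, x j • (Pi.single j 1 : Fin m → ℝ)) := by
        rw [map_sum]
        exact Finset.sum_congr rfl fun j _ => by rw [(fderiv ℝ Y x).map_smul]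
    _ = (fderiv ℝ Y x) x := by rw [hxsum]
    _ = (k : ℝ) • Y x := hkey


lemma dirac_poly_Y (e : Fin m → A) {Y : (Fin m → ℝ) → A} (hYd : Differentiable ℝ Y)
    (hmono : ∀ x, dirac e Y x = 0) (a : ℕ → ℝ) (d : ℕ) (x : Fin m → ℝ) :
    dirac e (fun y => (∑ l ∈ Finset.range d, a l * (∑ i, y i ^ 2) ^ l) • Y y) x =
      (2 * ∑ l ∈ Finset.range d, a l * (l * (∑ i, x i ^ 2) ^ (l - 1))) • (vecc e x * Y x) := by
  set q : ℝ := ∑ l ∈ Finset.range d, a l * (∑ i, x i ^ 2) ^ l with hq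
  set q' : ℝ := ∑ l ∈ Finset.range d, a l * ((l : ℝ) * (∑ i, x i ^ 2) ^ (l - 1)) with hq'
  have hp : ∀ j, pderiv' j (fun y => (∑ l ∈ Finset.range d, a l * (∑ i, y i ^ 2) ^ l) • Y y) x
      = q • pderiv' j Y x + (q' * (2 * x j)) • Y x := by
    intro j
    rw [pderiv'_polySmul a d (hYd x).hasFDerivAt j]
    rfl
  rw [dirac]
  simp only [hp]
  have hterm : ∀ j, e j * (q • pderiv' j Y x + (q' * (2 * x j)) • Y x)
      = q • (e j * pderiv' j Y x) + (2 * q' * x j) • (e j * Y x) := by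
    intro j
    rw [mul_add, mul_smul_comm, mul_smul_comm]
    congr 2
    ring
  simp only [hterm]
  rw [Finset.sum_add_distrib, ← Finset.smul_sum]
  have h0 : q • (∑ j, e j * pderiv' j Y x) = 0 := by
    have h := hmono x
    rw [dirac] at h
    rw [h, smul_zero]
  rw [h0, zero_add, vecc, Finset.sum_mul, Finset.smul_sum]
  refine Finset.sum_congr rfl fun j _ => ?_
  rw [smul_mul_assoc, smul_smul]


lemma pow_bridge (l : ℕ) (t : ℝ) : (l : ℝ) * t ^ (l - 1) * t = l * t ^ l := by
  cases l with
  | zero => simp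
  | succ n =>
    simp only [Nat.add_sub_cancel]
    rw [mul_assoc, ← pow_succ]

lemma dirac_poly_xY (e : Fin m → A) (hsq : ∀ j, e j * e j = -1)
    (hanti : ∀ i j, i ≠ j → e i * e j = -(e j * e i))
    {k : ℕ} {Y : (Fin m → ℝ) → A} (hYd : Differentiable ℝ Y)
    (hmono : ∀ x, dirac e Y x = 0)
    (hhomog : ∀ (c : ℝ), 0 < c → ∀ x : Fin m → ℝ, Y (c • x) = c ^ k • Y x)
    (a : ℕ → ℝ) (d : ℕ) (x : Fin m → ℝ) :
    dirac e (fun y => (∑ l ∈ Finset.range d, a l * (∑ i, y i ^ 2) ^ l) • (vecc e y * Y y)) x =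
      (∑ l ∈ Finset.range d, (-(2 * l + m + 2 * k)) * a l * (∑ i, x i ^ 2) ^ l) • Y x := by
  set t : ℝ := ∑ i, x i ^ 2 with ht
  set q : ℝ := ∑ l ∈ Finset.range d, a l * t ^ l with hq
  set q' : ℝ := ∑ l ∈ Finset.range d, a l * ((l : ℝ) * t ^ (l - 1)) with hq'
  set v : A := vecc e x with hv
  have hW : HasFDerivAt (fun y => vecc e y * Y y)
      (v • (fderiv ℝ Y x) +
        (∑ i : Fin m, (ContinuousLinearMap.proj (R := ℝ) (φ := fun _ : Fin m => ℝ) i).smulRight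
          (e i)).smulRight (Y x)) x :=
    (hasFDerivAt_vecc e x).mul' (hYd x).hasFDerivAt
  have hp : ∀ j, pderiv' j (fun y => (∑ l ∈ Finset.range d, a l * (∑ i, y i ^ 2) ^ l) •
        (vecc e y * Y y)) x
      = q • (v * pderiv' j Y x + e j * Y x) + (q' * (2 * x j)) • (v * Y x) := by
    intro j
    rw [pderiv'_polySmul a d hW j]
    congr 1
    rw [ContinuousLinearMap.add_apply, ContinuousLinearMap.smul_apply,
      ContinuousLinearMap.smulRight_apply, veccDeriv_apply, smul_eq_mul, smul_eq_mul]
    rw [hq, ht]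
    rfl
  rw [dirac]
  simp only [hp]
  have hterm : ∀ j, e j * (q • (v * pderiv' j Y x + e j * Y x) + (q' * (2 * x j)) • (v * Y x))
      = (q • (e j * (v * pderiv' j Y x)) + q • (e j * (e j * Y x))) +
        (2 * q' * x j) • (e j * (v * Y x)) := by
    intro j
    have hc : (q' * (2 * x j)) = (2 * q' * x j) := by ring
    rw [mul_add, mul_smul_comm, mul_smul_comm, mul_add, smul_add, hc]
  simp only [hterm]
  rw [Finset.sum_add_distrib, Finset.sum_add_distrib, ← Finset.smul_sum, ← Finset.smul_sum]
  have hS1 : (∑ j, e j * (v * pderiv' j Y x)) = (-(2 * (k : ℝ))) • Y x := by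
    have hj : ∀ j, e j * (v * pderiv' j Y x)
        = ((-(2 * x j)) • (1 : A) - v * e j) * pderiv' j Y x := by
      intro j
      rw [← mul_assoc, hv, gen_mul_vecc e hsq hanti x j]
    simp only [hj, sub_mul, smul_mul_assoc, one_mul]
    rw [Finset.sum_sub_distrib]
    have h1 : ∑ j, (-(2 * x j)) • pderiv' j Y x = (-2 : ℝ) • euler Y x := by
      rw [euler, Finset.smul_sum]
      refine Finset.sum_congr rfl fun j _ => ?_
      rw [smul_smul]
      congr 1
      ring
    have h2 : ∑ j, v * e j * pderiv' j Y x = v * ∑ j, e j * pderiv' j Y x := by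
      rw [Finset.mul_sum]
      exact Finset.sum_congr rfl fun j _ => by rw [mul_assoc]
    rw [h1, h2]
    have hd := hmono x
    rw [dirac] at hd
    rw [hd, mul_zero, sub_zero, euler_eq hYd hhomog x, smul_smul]
    congr 1
    ring
  have hS2 : (∑ j, e j * (e j * Y x)) = (-(m : ℝ)) • Y x := by
    have hj : ∀ j : Fin m, e j * (e j * Y x) = -(Y x) := by
      intro j
      rw [← mul_assoc, hsq j]
      simp
    simp only [hj]
    rw [Finset.sum_const, Finset.card_univ, Fintype.card_fin,
      ← Nat.cast_smul_eq_nsmul ℝ, smul_neg, ← neg_smul]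
  have hS3 : (∑ j, (2 * q' * x j) • (e j * (v * Y x))) = (2 * q' * (-t)) • Y x := by
    have hgen : ∀ w : A, (2 * q') • (vecc e x * w) = ∑ j, (2 * q' * x j) • (e j * w) := by
      intro w
      rw [vecc, Finset.sum_mul, Finset.smul_sum]
      refine Finset.sum_congr rfl fun j _ => ?_
      rw [smul_mul_assoc, smul_smul]
    have hvv : v * v = (-(∑ j, x j ^ 2)) • (1 : A) := by
      rw [hv]
      exact vecc_mul_self e hsq hanti x
    rw [← hgen (v * Y x), ← hv, ← mul_assoc, hvv, smul_mul_assoc, one_mul, ← ht, smul_smul]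
  rw [hS1, hS2, hS3, smul_smul, smul_smul, ← add_smul, ← add_smul]
  congr 1
  rw [hq, hq', Finset.sum_mul, Finset.sum_mul, Finset.mul_sum, Finset.sum_mul,
    ← Finset.sum_add_distrib, ← Finset.sum_add_distrib]
  refine Finset.sum_congr rfl fun l _ => ?_
  have hb := pow_bridge l t
  linear_combination (-2 * a l) * hb

end Aux

/-- The coefficient sequence for the odd Clifford–Legendre polynomials. -/
noncomputable def clCoeff (m k N : ℕ) : ℕ → ℕ → ℝ
  | 0, l => 2 * ((l : ℝ) + 1) * ((2 * N + 1).choose (l + 1)) * (-1) ^ (l + 1)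
  | n + 1, l => 2 * ((l : ℝ) + 1) * (-(2 * ((l : ℝ) + 1) + m + 2 * k)) * clCoeff m k N n (l + 1)

lemma clCoeff_vanish (m k N : ℕ) : ∀ n l, 2 * N + 1 < l + n + 1 → clCoeff m k N n l = 0 := by
  intro n
  induction n with
  | zero =>
    intro l hl
    rw [clCoeff, Nat.choose_eq_zero_of_lt (by omega)]
    simp
  | succ n ih =>
    intro l hl
    rw [clCoeff, ih (l + 1) (by omega), mul_zero]

lemma reindex_sum (a : ℕ → ℝ) (d : ℕ) (h : a d = 0) (t : ℝ) :
    2 * ∑ l ∈ Finset.range d, a l * ((l : ℝ) * t ^ (l - 1)) =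
      ∑ l ∈ Finset.range d, (2 * ((l : ℝ) + 1) * a (l + 1)) * t ^ l := by
  cases d with
  | zero => simp
  | succ n =>
    rw [Finset.mul_sum, Finset.sum_range_succ', Finset.sum_range_succ]
    rw [h]
    simp only [Nat.cast_zero, Nat.cast_add, Nat.cast_one, zero_mul, mul_zero, add_zero,
      Nat.add_sub_cancel, zero_add]
    refine Finset.sum_congr rfl fun l _ => by push_cast; ring

lemma prod_range_factorial (l M : ℕ) :
    (∏ i ∈ Finset.range M, ((l : ℝ) + 1 + i)) = (l + M).factorial / l.factorial := by
  induction M with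
  | zero => simp [div_self (Nat.cast_ne_zero.mpr (Nat.factorial_ne_zero l) : (l.factorial : ℝ) ≠ 0)]
  | succ n ih =>
    rw [Finset.prod_range_succ, ih]
    have harr : l + (n + 1) = (l + n) + 1 := by omega
    rw [harr, Nat.factorial_succ]
    have h1 : ((l.factorial : ℝ)) ≠ 0 := Nat.cast_ne_zero.mpr (Nat.factorial_ne_zero _)
    field_simp
    push_cast
    ring

lemma clCoeff_closed (m k N : ℕ) : ∀ n l, clCoeff m k N n l =
    (-1) ^ (l + 1) * 2 ^ (2 * n + 1) * ((2 * N + 1).choose (l + n + 1)) *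
      (∏ i ∈ Finset.range (n + 1), ((l : ℝ) + 1 + i)) *
      (∏ i ∈ Finset.range n, ((l : ℝ) + 1 + i + k + (m : ℝ) / 2)) := by
  intro n
  induction n with
  | zero =>
    intro l
    rw [clCoeff, Finset.prod_range_one, Finset.prod_range_zero]
    push_cast
    ring
  | succ n ih =>
    intro l
    rw [clCoeff, ih (l + 1)]
    have hp1 : (∏ i ∈ Finset.range (n + 1 + 1), ((l : ℝ) + 1 + i))
        = (∏ i ∈ Finset.range (n + 1), (((l : ℝ) + 1) + 1 + i)) * ((l : ℝ) + 1) := by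
      rw [Finset.prod_range_succ']
      simp only [Nat.cast_add, Nat.cast_one, Nat.cast_zero, add_zero]
      refine congrArg (· * _) (Finset.prod_congr rfl fun i _ => by push_cast; ring)
    have hp2 : (∏ i ∈ Finset.range (n + 1), ((l : ℝ) + 1 + i + k + (m : ℝ) / 2))
        = (∏ i ∈ Finset.range n, (((l : ℝ) + 1) + 1 + i + k + (m : ℝ) / 2)) *
            ((l : ℝ) + 1 + k + (m : ℝ) / 2) := by
      rw [Finset.prod_range_succ']
      simp only [Nat.cast_add, Nat.cast_one, Nat.cast_zero, add_zero]
      refine congrArg (· * _) (Finset.prod_congr rfl fun i _ => by push_cast; ring)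
    rw [hp1, hp2]
    have harr : l + 1 + n + 1 = l + (n + 1) + 1 := by omega
    rw [harr]
    push_cast
    ring

/-- Explicit representation of the odd Clifford-Legendre polynomials
`C_{2N+1,m}^0(Y_k)(x) = ∂_x^{2N+1}[(1-|x|²)^{2N+1} Y_k(x)]
  = -(2^{2N+1}(2N+1)!/N!) ∑_{l=0}^{N} C(N,l)(-1)^l (Γ(l+k+m/2+N+1)/Γ(l+k+m/2+1)) |x|^{2l} x Y_k(x)`,
where the Gamma ratio is the rising factorial `∏_{i=0}^{N-1}(l+k+m/2+1+i)`. -/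
theorem cliffordLegendre_odd_representation {m : ℕ} {A : Type*}
    [NormedRing A] [NormedAlgebra ℝ A]
    (e : Fin m → A)
    (hsq : ∀ j, e j * e j = -1)
    (hanti : ∀ i j, i ≠ j → e i * e j = -(e j * e i))
    (k : ℕ) (Y : (Fin m → ℝ) → A)
    (hY : ContDiff ℝ (⊤ : ℕ∞) Y)
    (hmono : ∀ x, dirac e Y x = 0)
    (hhomog : ∀ (c : ℝ), 0 < c → ∀ x : Fin m → ℝ, Y (c • x) = c ^ k • Y x)
    (N : ℕ) (x : Fin m → ℝ) :
    (dirac e)^[2 * N + 1] (fun y => (1 - ∑ j, (y j) ^ 2) ^ (2 * N + 1) • Y y) x =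
      (-((2 : ℝ) ^ (2 * N + 1) * (2 * N + 1).factorial / N.factorial)) •
        ∑ l ∈ Finset.range (N + 1),
          ((N.choose l : ℝ) * (-1) ^ l *
              (∏ i ∈ Finset.range N, ((l : ℝ) + k + (m : ℝ) / 2 + 1 + i)) *
              (∑ j, (x j) ^ 2) ^ l) • (vecc e x * Y x) := by
  have hYd : Differentiable ℝ Y := hY.differentiable (by simp)
  have hbinom : ∀ t : ℝ, (1 - t) ^ (2 * N + 1) =
      ∑ l ∈ Finset.range (2 * N + 2), (((2 * N + 1).choose l : ℝ) * (-1) ^ l) * t ^ l := by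
    intro t
    rw [sub_eq_add_neg, add_comm, add_pow]
    refine Finset.sum_congr rfl fun l _ => ?_
    rw [one_pow, neg_pow]
    ring
  have hF : (fun y : Fin m → ℝ => (1 - ∑ j, (y j) ^ 2) ^ (2 * N + 1) • Y y)
      = fun y => (∑ l ∈ Finset.range (2 * N + 2),
          (fun l : ℕ => ((2 * N + 1).choose l : ℝ) * (-1) ^ l) l * (∑ i, y i ^ 2) ^ l) • Y y := by
    funext y
    rw [hbinom]
  have main : ∀ n, n ≤ N →
      (dirac e)^[2 * n + 1] (fun y : Fin m → ℝ => (1 - ∑ j, (y j) ^ 2) ^ (2 * N + 1) • Y y)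
        = fun z => (∑ l ∈ Finset.range (2 * N + 2),
            clCoeff m k N n l * (∑ i, z i ^ 2) ^ l) • (vecc e z * Y z) := by
    intro n
    induction n with
    | zero =>
      intro _
      funext z
      rw [show 2 * 0 + 1 = 1 from rfl, Function.iterate_one, hF,
        dirac_poly_Y e hYd hmono _ (2 * N + 2) z,
        reindex_sum _ (2 * N + 2)
          (by simp [Nat.choose_eq_zero_of_lt (by omega : 2 * N + 1 < 2 * N + 2)])]
      congr 1
      refine Finset.sum_congr rfl fun l _ => ?_
      rw [clCoeff]
      push_cast
      ring
    | succ n ih =>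
      intro hn
      have hstep := ih (by omega)
      have heven : (dirac e)^[2 * n + 2]
            (fun y : Fin m → ℝ => (1 - ∑ j, (y j) ^ 2) ^ (2 * N + 1) • Y y)
          = fun z => (∑ l ∈ Finset.range (2 * N + 2),
              (fun l : ℕ => (-(2 * (l : ℝ) + m + 2 * k)) * clCoeff m k N n l) l *
                (∑ i, z i ^ 2) ^ l) • Y z := by
        funext z
        rw [show 2 * n + 2 = (2 * n + 1) + 1 from rfl, Function.iterate_succ_apply', hstep]
        exact dirac_poly_xY e hsq hanti hYd hmono hhomog (clCoeff m k N n) (2 * N + 2) z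
      funext z
      rw [show 2 * (n + 1) + 1 = (2 * n + 2) + 1 by omega, Function.iterate_succ_apply', heven,
        dirac_poly_Y e hYd hmono _ (2 * N + 2) z,
        reindex_sum _ (2 * N + 2)
          (by simp [clCoeff_vanish m k N n (2 * N + 2) (by omega)])]
      congr 1
      refine Finset.sum_congr rfl fun l _ => ?_
      rw [clCoeff]
      push_cast
      ring
  rw [main N le_rfl]
  beta_reduce
  rw [Finset.smul_sum, Finset.sum_smul]
  have hsub : Finset.range (N + 1) ⊆ Finset.range (2 * N + 2) :=
    Finset.range_subset_range.mpr (by omega)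
  have hvan : ∀ l ∈ Finset.range (2 * N + 2), l ∉ Finset.range (N + 1) →
      (clCoeff m k N N l * (∑ i, x i ^ 2) ^ l) • (vecc e x * Y x) = 0 := by
    intro l _ hl
    rw [clCoeff_vanish m k N N l (by simp at hl; omega), zero_mul, zero_smul]
  rw [← Finset.sum_subset hsub hvan]
  refine Finset.sum_congr rfl fun l hl => ?_
  rw [smul_smul]
  congr 1
  have hl' : l ≤ N := by
    have := Finset.mem_range.mp hl
    omega
  rw [clCoeff_closed, prod_range_factorial]
  have e3 : (∏ i ∈ Finset.range N, ((l : ℝ) + 1 + i + k + (m : ℝ) / 2))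
      = ∏ i ∈ Finset.range N, ((l : ℝ) + k + (m : ℝ) / 2 + 1 + i) :=
    Finset.prod_congr rfl fun i _ => by ring
  rw [e3]
  rw [Nat.cast_choose ℝ (show l + N + 1 ≤ 2 * N + 1 by omega),
    Nat.cast_choose ℝ hl']
  have e1 : 2 * N + 1 - (l + N + 1) = N - l := by omega
  have e2 : l + (N + 1) = l + N + 1 := by omega
  rw [e1, e2]
  have f1 : ((l.factorial : ℝ)) ≠ 0 := Nat.cast_ne_zero.mpr (Nat.factorial_ne_zero _)
  have f2 : (((N - l).factorial : ℝ)) ≠ 0 := Nat.cast_ne_zero.mpr (Nat.factorial_ne_zero _)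
  have f3 : ((N.factorial : ℝ)) ≠ 0 := Nat.cast_ne_zero.mpr (Nat.factorial_ne_zero _)
  have f4 : (((l + N + 1).factorial : ℝ)) ≠ 0 := Nat.cast_ne_zero.mpr (Nat.factorial_ne_zero _)
  field_simp
  ring
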